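/- arXiv:2006.00806 — 3 statements merged into one kernel-verified Lean document; each statement's English description precedes it below -/
import Mathlib

section
/- Let κ be a cardinal with cf(κ) > ω₁ and let X be a Banach space of density κ whose dual X* contains a subspace isomorphic to a nonseparable WLD Banach space. Then X does not admit an overcomplete set. -/
/-!
Read the WLD condition through `T`: for `x ∈ X`, the functional `y ↦ T y x` on `Y` is nonzero
only at countably many points of the linearly dense set `D`. Since `Y` is not separable, `D`
contains an `ω₁`-indexed family of nonzero vectors `g`, and the closed subspaces
`{x | T (g j) x = 0 for all j ≥ i}` (`i < ω₁`) are proper (`T` is bounded below) and cover `X`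
(a countable subset of `ω₁` is bounded). By the pigeonhole principle for `ℵ₁ < cf κ`, one of
them contains a subset of an overcomplete set of full cardinality, which would then be linearly
dense in a proper closed subspace.
-/

open Cardinal Set

universe u

/-- The density character of a topological space: the least cardinality of a dense subset. -/
noncomputable def dens (X : Type u) [TopologicalSpace X] : Cardinal.{u} :=
  ⨅ s : {s : Set X // Dense s}, Cardinal.mk ↥(s.1)

/-- A set is linearly dense if its closed linear span is the whole space. -/
def LinearlyDense {X : Type u} [NormedAddCommGroup X] [NormedSpace ℝ X] (S : Set X) : Prop :=
  (Submodule.span ℝ S).topologicalClosure = ⊤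

/-- A set `Y` is overcomplete in `X` if `|Y| = dens X` and every subset of `Y` of full
cardinality is linearly dense in `X`. -/
def Overcomplete {X : Type u} [NormedAddCommGroup X] [NormedSpace ℝ X] (Y : Set X) : Prop :=
  Cardinal.mk ↥Y = dens X ∧ ∀ Z ⊆ Y, Cardinal.mk ↥Z = Cardinal.mk ↥Y → LinearlyDense Z

theorem Cardinal.exists_mk_inter_eq_of_subset_iUnion {α ι : Type u} {Z : Set α} {A : ι → Set α}
    (hcover : Z ⊆ ⋃ i, A i) (hZ : ℵ₀ ≤ #Z) (hι : #ι < (#Z).ord.cof) :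
    ∃ i, #(Z ∩ A i : Set α) = #Z := by
  choose f hf using fun z : Z => mem_iUnion.1 (hcover z.2)
  obtain ⟨i, hi⟩ := infinite_pigeonhole f hZ hι
  refine ⟨i, le_antisymm (mk_le_mk_of_subset inter_subset_left) ?_⟩
  calc #Z = #(Subtype.val '' (f ⁻¹' {i})) := by rw [mk_image_eq Subtype.val_injective, hi]
    _ ≤ #(Z ∩ A i : Set α) := by
      refine mk_le_mk_of_subset ?_
      rintro _ ⟨z, rfl, rfl⟩
      exact ⟨z.2, hf z⟩

theorem Order.exists_forall_lt_of_mk_lt_cof {α : Type u} [LinearOrder α] {s : Set α}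
    (hs : #s < Order.cof α) : ∃ a, ∀ b ∈ s, b < a := by
  by_contra! h
  exact (Order.cof_le h).not_gt hs

theorem LinearlyDense.eq_top_of_subset {X : Type u} [NormedAddCommGroup X] [NormedSpace ℝ X]
    {S : Set X} (hS : LinearlyDense S) {M : Submodule ℝ X} (hM : IsClosed (M : Set X))
    (hSM : S ⊆ M) : M = ⊤ :=
  top_le_iff.1 <| hS ▸ Submodule.topologicalClosure_minimal _ (Submodule.span_le.2 hSM) hM

theorem LinearlyDense.separableSpace {X : Type u} [NormedAddCommGroup X] [NormedSpace ℝ X]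
    {S : Set X} (hS : LinearlyDense S) (hc : S.Countable) : TopologicalSpace.SeparableSpace X := by
  have := (hc.isSeparable.span (R := ℝ)).closure
  rw [← Submodule.topologicalClosure_coe, hS, Submodule.top_coe] at this
  exact TopologicalSpace.isSeparable_univ_iff.1 this

theorem not_overcomplete_of_iUnion {X ι : Type u} [NormedAddCommGroup X] [NormedSpace ℝ X]
    (C : ι → Submodule ℝ X) (hclosed : ∀ i, IsClosed (C i : Set X)) (hproper : ∀ i, C i ≠ ⊤)
    (hcover : ∀ x, ∃ i, x ∈ C i) (hdens : ℵ₀ ≤ dens X) (hι : #ι < (dens X).ord.cof)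
    {Z : Set X} : ¬ Overcomplete Z := by
  rintro ⟨hZ, hZdense⟩
  obtain ⟨i, hi⟩ := Cardinal.exists_mk_inter_eq_of_subset_iUnion (A := fun i => (C i : Set X))
    (fun x _ => mem_iUnion.2 (hcover x)) (hZ ▸ hdens) (hZ ▸ hι)
  exact hproper i <| (hZdense _ inter_subset_left hi).eq_top_of_subset (hclosed i)
    inter_subset_right

section TailKernel

variable {X I : Type u} [NormedAddCommGroup X] [NormedSpace ℝ X] [LinearOrder I]

/-- The preimage of the paper's `Z_i = {y* : supp y* ⊆ i}` under `x ↦ (j ↦ φ j x)`. -/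
def tailKer (φ : I → X →L[ℝ] ℝ) (i : I) : Submodule ℝ X :=
  ⨅ (j) (_ : i ≤ j), LinearMap.ker (φ j : X →ₗ[ℝ] ℝ)

variable {φ : I → X →L[ℝ] ℝ}

theorem mem_tailKer {i : I} {x : X} : x ∈ tailKer φ i ↔ ∀ j, i ≤ j → φ j x = 0 := by
  simp [tailKer]

theorem isClosed_tailKer (i : I) : IsClosed (tailKer φ i : Set X) := by
  simpa only [tailKer, Submodule.coe_iInf] using
    isClosed_iInter fun j => isClosed_iInter fun _ => (φ j).isClosed_ker

theorem tailKer_ne_top {i : I} (hφ : φ i ≠ 0) : tailKer φ i ≠ ⊤ := by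
  intro h
  refine hφ (ContinuousLinearMap.ext fun x => ?_)
  exact mem_tailKer.1 (h ▸ Submodule.mem_top) i le_rfl

theorem exists_mem_tailKer (hI : ℵ₀ < Order.cof I) {x : X} (hx : {j | φ j x ≠ 0}.Countable) :
    ∃ i, x ∈ tailKer φ i := by
  obtain ⟨i, hi⟩ := Order.exists_forall_lt_of_mk_lt_cof (hx.le_aleph0.trans_lt hI)
  exact ⟨i, mem_tailKer.2 fun j hij => not_not.1 fun hj => (hi j hj).not_ge hij⟩

theorem not_overcomplete_of_countable_support (hI : ℵ₀ < Order.cof I)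
    (hIX : #I < (dens X).ord.cof) (hφ : ∀ i, φ i ≠ 0)
    (hsupp : ∀ x, {j | φ j x ≠ 0}.Countable) (Z : Set X) : ¬ Overcomplete Z :=
  have hdens : ℵ₀ ≤ dens X :=
    (hI.trans_le (Order.cof_le_cardinalMk I)).le.trans (hIX.trans_le (Ordinal.cof_ord_le _)).le
  not_overcomplete_of_iUnion (tailKer φ) isClosed_tailKer (fun _ => tailKer_ne_top (hφ _))
    (fun x => exists_mem_tailKer hI (hsupp x)) hdens hIX

end TailKernel

theorem LinearlyDense.exists_injective_aleph_one {Y : Type u} [NormedAddCommGroup Y]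
    [NormedSpace ℝ Y] {D : Set Y} (hD : LinearlyDense D)
    (hY : ¬ TopologicalSpace.SeparableSpace Y) :
    ∃ g : (ℵ₁ : Cardinal.{u}).ord.ToType → Y, Function.Injective g ∧ ∀ i, g i ∈ D \ {0} := by
  have hunc : ¬ (D \ {0}).Countable := fun h =>
    hY (hD.separableSpace (h.of_sdiff (countable_singleton 0)))
  obtain ⟨g⟩ : Nonempty ((ℵ₁ : Cardinal.{u}).ord.ToType ↪ (D \ {0} : Set Y)) := by
    rw [← Cardinal.le_def, mk_toType, card_ord]
    exact aleph_one_le_iff.2 <| aleph0_lt_mk_iff.2 <|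
      not_countable_iff.1 (hunc ∘ Set.countable_coe_iff.1)
  exact ⟨fun i => g i, fun i j h => g.injective (Subtype.ext h), fun i => (g i).2⟩

theorem stmt17_general {X Y : Type u} [NormedAddCommGroup X] [NormedSpace ℝ X]
    [NormedAddCommGroup Y] [NormedSpace ℝ Y]
    {κ : Cardinal.{u}} (hcf : Cardinal.aleph 1 < (κ.ord).cof) (hdens : dens X = κ)
    (hWLD : ∃ D : Set Y, LinearlyDense D ∧
      ∀ φ : Y →L[ℝ] ℝ, {d ∈ D | φ d ≠ 0}.Countable)
    (hnonsep : ¬ TopologicalSpace.SeparableSpace Y)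
    (T : Y →L[ℝ] (X →L[ℝ] ℝ)) (c : ℝ) (hc : 0 < c) (hT : ∀ v, c * ‖v‖ ≤ ‖T v‖) :
    ¬ ∃ Z : Set X, Overcomplete Z := by
  rintro ⟨Z, hZ⟩
  obtain ⟨D, hD, hsupp⟩ := hWLD
  obtain ⟨g, hg, hgD⟩ := hD.exists_injective_aleph_one hnonsep
  have hT0 : ∀ i, T (g i) ≠ 0 := fun i h => (hgD i).2 <| norm_eq_zero.1 <|
    le_antisymm (le_of_mul_le_mul_left (by simpa [h] using hT (g i)) hc) (norm_nonneg _)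
  refine not_overcomplete_of_countable_support (φ := fun i => T (g i)) ?_ ?_ hT0 (fun x => ?_)
    Z hZ
  · rw [Ordinal.cof_toType, isRegular_aleph_one.cof_ord]
    exact aleph0_lt_aleph_one
  · rwa [mk_toType, card_ord, hdens]
  · exact ((hsupp (T.flip x)).preimage hg).mono fun i hi =>
      show g i ∈ {d ∈ D | T.flip x d ≠ 0} from ⟨(hgD i).1, hi⟩

/-- if `cf κ > ω₁`, `X` is a Banach space of density `κ`, and `X*` contains
an isomorphic copy of a nonseparable WLD Banach space `Y`, then `X` has no overcomplete
set. -/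
theorem stmt17 {X Y : Type u} [NormedAddCommGroup X] [NormedSpace ℝ X] [CompleteSpace X]
    [NormedAddCommGroup Y] [NormedSpace ℝ Y] [CompleteSpace Y]
    {κ : Cardinal.{u}} (hcf : Cardinal.aleph 1 < (κ.ord).cof) (hdens : dens X = κ)
    (hWLD : ∃ D : Set Y, LinearlyDense D ∧
      ∀ φ : Y →L[ℝ] ℝ, {d ∈ D | φ d ≠ 0}.Countable)
    (hnonsep : ¬ TopologicalSpace.SeparableSpace Y)
    (T : Y →L[ℝ] (X →L[ℝ] ℝ)) (c : ℝ) (hc : 0 < c) (hT : ∀ v, c * ‖v‖ ≤ ‖T v‖) :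
    ¬ ∃ Z : Set X, Overcomplete Z :=
  stmt17_general hcf hdens hWLD hnonsep T c hc hT
end

section
/- Let K be an infinite compact Hausdorff space and κ an infinite cardinal. Then every x* in the unit sphere of C(K)* has character ≥ κ in the dual ball B_{C(K)*} with the weak* topology if and only if every Radon probability measure μ on K has character ≥ κ as a point of the space P(K) of Radon probability measures on K with the weak* topology. -/
/-!
A positive unital functional has norm one, and conversely a point `ψ` of the dual ball `B` with
`ψ 1 ≥ 1` is positive and unital; so `P(K) = B ∩ {ψ | ψ 1 ≥ 1}` is a compact `G_δ` subset of the
compact space `B`. Adding the countably many open sets `{ψ | ψ 1 > 1 - 1/n}` to a neighbourhood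
base of `μ` in `P(K)` yields a family whose members meet `B` only in `μ`, and by compactness their
finite intersections form a neighbourhood base of `μ` in `B`; since `P(K)` has no isolated points,
that base is infinite and its cardinality is unchanged.

Conversely, the Jordan decomposition `φ = φ⁺ - φ⁻` with `φ⁺ 1 + φ⁻ 1 ≤ ‖φ‖` writes a norm-one `φ`
as `s • μ + c` with `μ ∈ P(K)`, `s ≠ 0` and `|s| + ‖c‖ ≤ 1`. Then `ψ ↦ s • ψ + c` maps the compact
set `P(K)` continuously and injectively into `B`, so it is an embedding, and the character of `φ`
in `B` is at least that of `μ` in `P(K)`.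
-/

open Cardinal Set

universe u

/-- The character of the point `x` relative to the subspace `A ⊆ T` (with the subspace
topology): the least cardinality of a family `B` of open neighbourhoods of `x` such that
every open neighbourhood of `x` contains some `V ∩ A` with `V ∈ B`. -/
noncomputable def relChar {T : Type u} [TopologicalSpace T] (A : Set T) (x : T) : Cardinal.{u} :=
  sInf {c | ∃ B : Set (Set T), Cardinal.mk ↥B = c ∧ (∀ V ∈ B, x ∈ V ∧ IsOpen V) ∧
    ∀ U : Set T, IsOpen U → x ∈ U → ∃ V ∈ B, V ∩ A ⊆ U}

/-- The closed unit ball of the dual of `X`, as a subset of the weak* dual. -/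
def dualBall (X : Type u) [NormedAddCommGroup X] [NormedSpace ℝ X] : Set (WeakDual ℝ X) :=
  {φ | ‖WeakDual.toStrongDual φ‖ ≤ 1}

section RelChar

variable {T : Type u} [TopologicalSpace T] {A : Set T} {x : T} {B : Set (Set T)}

def IsRelNhdsBase (A : Set T) (x : T) (B : Set (Set T)) : Prop :=
  (∀ V ∈ B, x ∈ V ∧ IsOpen V) ∧ ∀ U : Set T, IsOpen U → x ∈ U → ∃ V ∈ B, V ∩ A ⊆ U

theorem relChar_le_mk (hB : IsRelNhdsBase A x B) : relChar A x ≤ #B :=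
  csInf_le' ⟨B, rfl, hB⟩

theorem le_relChar {c : Cardinal.{u}} (h : ∀ B, IsRelNhdsBase A x B → c ≤ #B) :
    c ≤ relChar A x :=
  le_csInf ⟨_, {V | x ∈ V ∧ IsOpen V}, rfl, fun _ hV => hV,
      fun U hU hxU => ⟨U, ⟨hxU, hU⟩, inter_subset_left⟩⟩
    (by rintro _ ⟨B, rfl, hB⟩; exact h B hB)

theorem IsRelNhdsBase.eq_of_forall_mem [T2Space T] (hB : IsRelNhdsBase A x B) {y : T}
    (hyA : y ∈ A) (hyB : ∀ V ∈ B, y ∈ V) : y = x := by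
  by_contra hne
  obtain ⟨U₁, U₂, -, hU₂, hyU₁, hxU₂, hU⟩ := t2_separation hne
  obtain ⟨V, hVB, hVU⟩ := hB.2 U₂ hU₂ hxU₂
  exact hU.ne_of_mem hyU₁ (hVU ⟨hyB V hVB, hyA⟩) rfl

theorem IsRelNhdsBase.infinite [T2Space T] (hB : IsRelNhdsBase A x B)
    (hx : x ∈ closure (A \ {x})) : B.Infinite := by
  intro hfin
  obtain ⟨y, hyB, hyA, hyx⟩ := mem_closure_iff.1 hx _
    (hfin.isOpen_sInter fun V hV => (hB.1 V hV).2) (mem_sInter.2 fun V hV => (hB.1 V hV).1)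
  exact hyx (hB.eq_of_forall_mem hyA (mem_sInter.1 hyB))

/-- In a compact set pseudocharacter bounds character: finite intersections of closed shrinkings
of the members of `S` form a neighbourhood base of `x` in `A`. -/
theorem relChar_le_mk_of_forall_mem_eq [RegularSpace T] (hA : IsCompact A) {S : Set (Set T)}
    (hS_inf : S.Infinite) (hS : ∀ V ∈ S, x ∈ V ∧ IsOpen V)
    (hpt : ∀ y ∈ A, (∀ V ∈ S, y ∈ V) → y = x) : relChar A x ≤ #S := by
  have := hS_inf.to_subtype
  choose C hCx hCc hCV using fun V : S =>
    exists_mem_nhds_isClosed_subset ((hS V V.2).2.mem_nhds (hS V V.2).1)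
  refine (relChar_le_mk (B := range fun F : Finset S => interior (⋂ V ∈ F, C V)) ⟨?_, ?_⟩).trans
    (mk_range_le.trans (mk_finset_of_infinite S).le)
  · rintro _ ⟨F, rfl⟩
    exact ⟨mem_interior_iff_mem_nhds.2 ((F.iInter_mem_sets).2 fun V _ => hCx V), isOpen_interior⟩
  · intro U hU hxU
    have hcover : A \ U ⊆ ⋃ V : S, (C V)ᶜ := by
      rintro y ⟨hyA, hyU⟩
      by_contra hy
      simp only [mem_iUnion, mem_compl_iff, not_exists, not_not] at hy
      exact hyU (hpt y hyA (fun V hV => hCV ⟨V, hV⟩ (hy ⟨V, hV⟩)) ▸ hxU)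
    obtain ⟨F, hF⟩ := (hA.diff hU).elim_finite_subcover _ (fun V => (hCc V).isOpen_compl) hcover
    refine ⟨_, ⟨F, rfl⟩, fun y ⟨hyC, hyA⟩ => ?_⟩
    by_contra hyU
    obtain ⟨V, hVF, hyV⟩ := mem_iUnion₂.1 (hF ⟨hyA, hyU⟩)
    exact hyV (mem_iInter₂.1 (interior_subset hyC) V hVF)

/-- Passing to the trace on a `G_δ` set `Q` adds only countably many conditions to a
neighbourhood base, so it cannot lower an infinite character inside a compact set. -/
theorem relChar_le_relChar_of_isGδ [T2Space T] [RegularSpace T] {P Q : Set T}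
    (hA : IsCompact A) (hQ : IsGδ Q) (hxQ : x ∈ Q) (hAQ : A ∩ Q ⊆ P)
    (hx : x ∈ closure (P \ {x})) : relChar A x ≤ relChar P x := by
  refine le_relChar fun B hB => ?_
  obtain ⟨𝒢, h𝒢o, h𝒢c, rfl⟩ := hQ
  have hB_inf := hB.infinite hx
  calc relChar A x ≤ #↥(B ∪ 𝒢) := by
        refine relChar_le_mk_of_forall_mem_eq hA (hB_inf.mono subset_union_left) ?_ ?_
        · rintro V (hV | hV)
          exacts [hB.1 V hV, ⟨mem_sInter.1 hxQ V hV, h𝒢o V hV⟩]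
        · intro y hyA hy
          have hyP : y ∈ P := hAQ ⟨hyA, mem_sInter.2 fun V hV => hy V (Or.inr hV)⟩
          exact hB.eq_of_forall_mem hyP fun V hV => hy V (Or.inl hV)
    _ ≤ #B + #𝒢 := mk_union_le B 𝒢
    _ = #B :=
        have hB_aleph0 : ℵ₀ ≤ #B := infinite_iff.1 hB_inf.to_subtype
        add_eq_left hB_aleph0 (h𝒢c.le_aleph0.trans hB_aleph0)

theorem relChar_le_relChar_of_continuous {T' : Type u} [TopologicalSpace T'] [T2Space T']
    {P : Set T} {A' : Set T'} {y : T} {g : T → T'} (hg : Continuous g) (hP : IsCompact P)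
    (hgP : MapsTo g P A') (hinj : ∀ z ∈ P, g z = g y → z = y) :
    relChar P y ≤ relChar A' (g y) := by
  refine le_relChar fun B hB => (relChar_le_mk (B := (g ⁻¹' ·) '' B) ⟨?_, ?_⟩).trans mk_image_le
  · rintro _ ⟨V, hV, rfl⟩
    exact ⟨(hB.1 V hV).1, (hB.1 V hV).2.preimage hg⟩
  · intro U hU hyU
    have hyK : g y ∉ g '' (P \ U) := by
      rintro ⟨z, ⟨hzP, hzU⟩, hz⟩
      exact hzU (hinj z hzP hz ▸ hyU)
    obtain ⟨V, hVB, hVsub⟩ := hB.2 _ ((hP.diff hU).image hg).isClosed.isOpen_compl hyK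
    refine ⟨g ⁻¹' V, ⟨V, hVB, rfl⟩, fun z ⟨hzV, hzP⟩ => ?_⟩
    by_contra hzU
    exact hVsub ⟨hzV, hgP hzP⟩ ⟨z, ⟨hzP, hzU⟩, rfl⟩

end RelChar

section PositiveFunctional

variable {K : Type u} [TopologicalSpace K] [CompactSpace K]

theorem ContinuousMap.norm_le_norm_of_nonneg_of_le {f g : C(K, ℝ)} (hg : 0 ≤ g) (hgf : g ≤ f) :
    ‖g‖ ≤ ‖f‖ :=
  (g.norm_le (norm_nonneg f)).2 fun x => by
    rw [Real.norm_eq_abs, abs_of_nonneg (ContinuousMap.le_def.1 hg x)]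
    exact (ContinuousMap.le_def.1 hgf x).trans ((le_abs_self _).trans (f.norm_coe_le_norm x))

theorem ContinuousMap.norm_one_le : ‖(1 : C(K, ℝ))‖ ≤ 1 :=
  (ContinuousMap.norm_le _ zero_le_one).2 fun _ => by simp

theorem abs_apply_le_apply_one_mul_norm (L : C(K, ℝ) →ₗ[ℝ] ℝ) (hL : ∀ f, 0 ≤ f → 0 ≤ L f)
    (f : C(K, ℝ)) : |L f| ≤ L 1 * ‖f‖ := by
  have hbound : ∀ x, |f x| ≤ ‖f‖ := fun x => by simpa using f.norm_coe_le_norm x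
  have h₁ := hL (‖f‖ • 1 - f) <| ContinuousMap.le_def.2 fun x => by
    simp only [ContinuousMap.zero_apply, ContinuousMap.sub_apply, ContinuousMap.smul_apply,
      ContinuousMap.one_apply, smul_eq_mul, mul_one]
    linarith [le_abs_self (f x), hbound x]
  have h₂ := hL (‖f‖ • 1 + f) <| ContinuousMap.le_def.2 fun x => by
    simp only [ContinuousMap.zero_apply, ContinuousMap.add_apply, ContinuousMap.smul_apply,
      ContinuousMap.one_apply, smul_eq_mul, mul_one]
    linarith [neg_abs_le (f x), hbound x]
  rw [map_sub, map_smul, smul_eq_mul] at h₁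
  rw [map_add, map_smul, smul_eq_mul] at h₂
  exact abs_le.2 ⟨by linarith, by linarith⟩

theorem opNorm_eq_apply_one {φ : C(K, ℝ) →L[ℝ] ℝ} (hφ : ∀ f, 0 ≤ f → 0 ≤ φ f) : ‖φ‖ = φ 1 :=
  le_antisymm
    (φ.opNorm_le_bound (hφ 1 zero_le_one) (abs_apply_le_apply_one_mul_norm φ.toLinearMap hφ))
    ((le_abs_self _).trans ((φ.le_opNorm 1).trans
      (mul_le_of_le_one_right (norm_nonneg φ) ContinuousMap.norm_one_le)))

theorem eq_zero_of_apply_one_eq_zero {φ : C(K, ℝ) →L[ℝ] ℝ} (hφ : ∀ f, 0 ≤ f → 0 ≤ φ f)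
    (h1 : φ 1 = 0) : φ = 0 :=
  norm_eq_zero (a := φ) |>.1 ((opNorm_eq_apply_one hφ).trans h1)

end PositiveFunctional

theorem exists_add_eq_of_mem_Icc_zero_add {α : Type*} [Lattice α] [AddCommGroup α]
    [IsOrderedAddMonoid α] {a b c : α} (ha : 0 ≤ a) (hb : 0 ≤ b) (hc : c ∈ Icc 0 (a + b)) :
    ∃ a' ∈ Icc 0 a, ∃ b' ∈ Icc 0 b, a' + b' = c := by
  refine ⟨c ⊓ a, ⟨le_inf hc.1 ha, inf_le_right⟩, (c - a)⁺, ⟨posPart_nonneg _, ?_⟩, ?_⟩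
  · exact (posPart_mono (sub_le_iff_le_add'.2 hc.2)).trans (posPart_eq_self.2 hb).le
  · rw [inf_eq_sub_posPart_sub, sub_add_cancel]

section Jordan

variable {K : Type u} [TopologicalSpace K] (φ : C(K, ℝ) →L[ℝ] ℝ) {f g : C(K, ℝ)}

/-- On `f ≥ 0` this is the value of the positive part of `φ` (Riesz–Kantorovich formula). -/
noncomputable def supIcc (f : C(K, ℝ)) : ℝ :=
  ⨆ g : Icc (0 : C(K, ℝ)) f, φ g

theorem supIcc_le (hf : 0 ≤ f) {c : ℝ} (h : ∀ g ∈ Icc 0 f, φ g ≤ c) : supIcc φ f ≤ c :=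
  have : Nonempty (Icc 0 f) := ⟨⟨0, le_rfl, hf⟩⟩
  ciSup_le fun g => h g g.2

variable [CompactSpace K]

theorem bddAbove_range_apply_Icc (f : C(K, ℝ)) :
    BddAbove (range fun g : Icc (0 : C(K, ℝ)) f => φ g) := by
  refine ⟨‖φ‖ * ‖f‖, ?_⟩
  rintro _ ⟨g, rfl⟩
  calc φ g ≤ ‖φ‖ * ‖(g : C(K, ℝ))‖ := (le_abs_self _).trans (φ.le_opNorm g)
    _ ≤ ‖φ‖ * ‖f‖ := by gcongr; exact ContinuousMap.norm_le_norm_of_nonneg_of_le g.2.1 g.2.2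

theorem le_supIcc (hg : g ∈ Icc 0 f) : φ g ≤ supIcc φ f :=
  le_ciSup (f := fun g : Icc (0 : C(K, ℝ)) f => φ g) (bddAbove_range_apply_Icc φ f) ⟨g, hg⟩

theorem supIcc_add (hf : 0 ≤ f) (hg : 0 ≤ g) : supIcc φ (f + g) = supIcc φ f + supIcc φ g := by
  refine le_antisymm (supIcc_le φ (add_nonneg hf hg) fun h hh => ?_) ?_
  · obtain ⟨f', hf', g', hg', rfl⟩ := exists_add_eq_of_mem_Icc_zero_add hf hg hh
    rw [map_add]
    exact add_le_add (le_supIcc φ hf') (le_supIcc φ hg')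
  · have : Nonempty (Icc 0 f) := ⟨⟨0, le_rfl, hf⟩⟩
    have : Nonempty (Icc 0 g) := ⟨⟨0, le_rfl, hg⟩⟩
    refine ciSup_add_ciSup_le fun f' g' => ?_
    rw [← map_add]
    exact le_supIcc φ ⟨add_nonneg f'.2.1 g'.2.1, add_le_add f'.2.2 g'.2.2⟩

theorem supIcc_zero : supIcc φ 0 = 0 := by
  simpa using supIcc_add φ le_rfl le_rfl

theorem supIcc_smul_le {c : ℝ} (hc : 0 < c) (hf : 0 ≤ f) :
    supIcc φ (c • f) ≤ c * supIcc φ f := by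
  refine supIcc_le φ (smul_nonneg hc.le hf) fun g hg => ?_
  have hg' : c⁻¹ • g ∈ Icc 0 f :=
    ⟨smul_nonneg (inv_nonneg.2 hc.le) hg.1, (inv_smul_le_iff_of_pos hc).2 hg.2⟩
  calc φ g = c * φ (c⁻¹ • g) := by rw [map_smul, smul_eq_mul, mul_inv_cancel_left₀ hc.ne']
    _ ≤ c * supIcc φ f := mul_le_mul_of_nonneg_left (le_supIcc φ hg') hc.le

theorem supIcc_smul {c : ℝ} (hc : 0 < c) (hf : 0 ≤ f) : supIcc φ (c • f) = c * supIcc φ f := by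
  refine le_antisymm (supIcc_smul_le φ hc hf) ?_
  have := supIcc_smul_le φ (inv_pos.2 hc) (smul_nonneg hc.le hf)
  rwa [inv_smul_smul₀ hc.ne', le_inv_mul_iff₀ hc] at this

theorem supIcc_posPart_sub_supIcc_negPart {u v : C(K, ℝ)} (hu : 0 ≤ u) (hv : 0 ≤ v) :
    supIcc φ (u - v)⁺ - supIcc φ (u - v)⁻ = supIcc φ u - supIcc φ v := by
  have h := congrArg (supIcc φ) (sub_eq_sub_iff_add_eq_add.1 (posPart_sub_negPart (u - v)))
  rw [supIcc_add φ (posPart_nonneg _) hv, supIcc_add φ hu (negPart_nonneg _)] at h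
  linarith

noncomputable def jordanPosₗ : C(K, ℝ) →ₗ[ℝ] ℝ where
  toFun f := supIcc φ f⁺ - supIcc φ f⁻
  map_add' f g := by
    have h := supIcc_posPart_sub_supIcc_negPart φ (add_nonneg (posPart_nonneg f) (posPart_nonneg g))
      (add_nonneg (negPart_nonneg f) (negPart_nonneg g))
    rw [add_sub_add_comm, posPart_sub_negPart, posPart_sub_negPart] at h
    rw [h, supIcc_add φ (posPart_nonneg f) (posPart_nonneg g),
      supIcc_add φ (negPart_nonneg f) (negPart_nonneg g)]
    ring
  map_smul' c f := by
    rcases lt_trichotomy c 0 with hc | rfl | hc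
    · have h := supIcc_posPart_sub_supIcc_negPart φ
        (smul_nonneg (neg_nonneg.2 hc.le) (negPart_nonneg f))
        (smul_nonneg (neg_nonneg.2 hc.le) (posPart_nonneg f))
      have hcf : (-c) • f⁻ - (-c) • f⁺ = c • f := by
        rw [← smul_sub, ← neg_sub, posPart_sub_negPart, neg_smul_neg]
      rw [hcf] at h
      rw [RingHom.id_apply, smul_eq_mul, h, supIcc_smul φ (neg_pos.2 hc) (negPart_nonneg f),
        supIcc_smul φ (neg_pos.2 hc) (posPart_nonneg f)]
      ring
    · simp [supIcc_zero]
    · have h := supIcc_posPart_sub_supIcc_negPart φ (smul_nonneg hc.le (posPart_nonneg f))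
        (smul_nonneg hc.le (negPart_nonneg f))
      rw [← smul_sub, posPart_sub_negPart] at h
      rw [RingHom.id_apply, smul_eq_mul, h, supIcc_smul φ hc (posPart_nonneg f),
        supIcc_smul φ hc (negPart_nonneg f)]
      ring

theorem jordanPosₗ_apply_of_nonneg (hf : 0 ≤ f) : jordanPosₗ φ f = supIcc φ f := by
  simp [jordanPosₗ, posPart_eq_self.2 hf, negPart_eq_zero.2 hf, supIcc_zero]

theorem jordanPosₗ_nonneg (hf : 0 ≤ f) : 0 ≤ jordanPosₗ φ f := by
  rw [jordanPosₗ_apply_of_nonneg φ hf, ← map_zero φ]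
  exact le_supIcc φ ⟨le_rfl, hf⟩

noncomputable def jordanPos : C(K, ℝ) →L[ℝ] ℝ :=
  (jordanPosₗ φ).mkContinuous (jordanPosₗ φ 1)
    (abs_apply_le_apply_one_mul_norm _ fun _ => jordanPosₗ_nonneg φ)

theorem jordanPos_apply_of_nonneg (hf : 0 ≤ f) : jordanPos φ f = supIcc φ f :=
  jordanPosₗ_apply_of_nonneg φ hf

theorem two_mul_supIcc_one_sub_le_norm : 2 * supIcc φ 1 - φ 1 ≤ ‖φ‖ := by
  suffices supIcc φ 1 ≤ (‖φ‖ + φ 1) / 2 by linarith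
  refine supIcc_le φ zero_le_one fun g hg => ?_
  have hnorm : ‖(2 : ℝ) • g - 1‖ ≤ 1 := (ContinuousMap.norm_le _ zero_le_one).2 fun x => by
    have h₀ := ContinuousMap.le_def.1 hg.1 x
    have h₁ := ContinuousMap.le_def.1 hg.2 x
    simp only [ContinuousMap.zero_apply, ContinuousMap.one_apply] at h₀ h₁
    simp only [ContinuousMap.sub_apply, ContinuousMap.smul_apply, ContinuousMap.one_apply,
      smul_eq_mul, Real.norm_eq_abs, abs_le]
    constructor <;> linarith
  have h := (le_abs_self _).trans ((φ.le_opNorm ((2 : ℝ) • g - 1)).trans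
    (mul_le_of_le_one_right (norm_nonneg φ) hnorm))
  rw [map_sub, map_smul, smul_eq_mul] at h
  linarith

theorem exists_jordan_decomposition :
    ∃ φp φn : C(K, ℝ) →L[ℝ] ℝ, (∀ f, 0 ≤ f → 0 ≤ φp f) ∧ (∀ f, 0 ≤ f → 0 ≤ φn f) ∧
      φ = φp - φn ∧ φp 1 + φn 1 ≤ ‖φ‖ := by
  refine ⟨jordanPos φ, jordanPos φ - φ, fun f => jordanPosₗ_nonneg φ, fun f hf => ?_,
    (sub_sub_cancel _ _).symm, ?_⟩
  · rw [sub_apply, sub_nonneg, jordanPos_apply_of_nonneg φ hf]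
    exact le_supIcc φ ⟨hf, le_rfl⟩
  · rw [sub_apply, jordanPos_apply_of_nonneg φ zero_le_one]
    linarith [two_mul_supIcc_one_sub_le_norm φ]

end Jordan

theorem isCompact_dualBall (X : Type u) [NormedAddCommGroup X] [NormedSpace ℝ X] :
    IsCompact (dualBall X) := by
  convert WeakDual.isCompact_closedBall (𝕜 := ℝ) (0 : StrongDual ℝ X) 1 using 1
  ext ψ
  simp [dualBall]

section ProbFunctionals

variable (K : Type u) [TopologicalSpace K]

/-- `P(K)`: through the Riesz representation theorem, Radon probability measures on `K` are the
positive functionals on `C(K)` taking the value `1` at `1`. -/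
def probFunctionals : Set (WeakDual ℝ C(K, ℝ)) :=
  {ψ | (∀ f : C(K, ℝ), 0 ≤ f → 0 ≤ ψ f) ∧ ψ 1 = 1}

variable {K}

theorem convex_probFunctionals : Convex ℝ (probFunctionals K) :=
  fun ψ hψ χ hχ a b ha hb hab => ⟨fun f hf => add_nonneg (mul_nonneg ha (hψ.1 f hf))
    (mul_nonneg hb (hχ.1 f hf)), by
      change a * ψ 1 + b * χ 1 = 1
      rw [hψ.2, hχ.2, mul_one, mul_one, hab]⟩

theorem evalCLM_mem_probFunctionals (x : K) :
    StrongDual.toWeakDual (ContinuousMap.evalCLM ℝ x) ∈ probFunctionals K :=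
  ⟨fun _ hf => ContinuousMap.le_def.1 hf x, rfl⟩

theorem inv_smul_mem_probFunctionals {ψ : C(K, ℝ) →L[ℝ] ℝ} (hψ : ∀ f, 0 ≤ f → 0 ≤ ψ f)
    (h1 : ψ 1 ≠ 0) : StrongDual.toWeakDual ((ψ 1)⁻¹ • ψ) ∈ probFunctionals K :=
  ⟨fun f hf => mul_nonneg (inv_nonneg.2 (hψ 1 zero_le_one)) (hψ f hf), inv_mul_cancel₀ h1⟩

variable [CompactSpace K]

theorem norm_toStrongDual_of_mem_probFunctionals {ψ : WeakDual ℝ C(K, ℝ)}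
    (hψ : ψ ∈ probFunctionals K) : ‖WeakDual.toStrongDual ψ‖ = 1 :=
  (opNorm_eq_apply_one (φ := WeakDual.toStrongDual ψ) hψ.1).trans hψ.2

theorem probFunctionals_eq_dualBall_inter :
    probFunctionals K = dualBall C(K, ℝ) ∩ {ψ | 1 ≤ ψ 1} := by
  refine Subset.antisymm (fun ψ hψ => ⟨(norm_toStrongDual_of_mem_probFunctionals hψ).le,
    hψ.2.ge⟩) fun ψ ⟨hψ, h1⟩ => ?_
  have hψ_le : ∀ f : C(K, ℝ), ψ f ≤ ‖f‖ := fun f =>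
    (le_abs_self _).trans (((WeakDual.toStrongDual ψ).le_opNorm f).trans
      (mul_le_of_le_one_left (norm_nonneg f) hψ))
  have hψ1 : ψ 1 = 1 := le_antisymm ((hψ_le 1).trans ContinuousMap.norm_one_le) h1
  refine ⟨fun f hf => ?_, hψ1⟩
  have hnorm : ‖‖f‖ • 1 - f‖ ≤ ‖f‖ := (ContinuousMap.norm_le _ (norm_nonneg f)).2 fun x => by
    have h₀ := ContinuousMap.le_def.1 hf x
    have h₁ : f x ≤ ‖f‖ := (le_abs_self _).trans (f.norm_coe_le_norm x)
    simp only [ContinuousMap.zero_apply] at h₀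
    simp only [ContinuousMap.sub_apply, ContinuousMap.smul_apply, ContinuousMap.one_apply,
      smul_eq_mul, mul_one, Real.norm_eq_abs, abs_le]
    constructor <;> linarith
  have h := (hψ_le _).trans hnorm
  rw [map_sub, map_smul, hψ1, smul_eq_mul, mul_one] at h
  linarith

theorem isCompact_probFunctionals : IsCompact (probFunctionals K) := by
  rw [probFunctionals_eq_dualBall_inter]
  exact (isCompact_dualBall _).inter_right
    (isClosed_le continuous_const (WeakDual.eval_continuous 1))

theorem mem_closure_probFunctionals_diff_singleton [T2Space K] [Nontrivial K]
    {μ : WeakDual ℝ C(K, ℝ)} (hμ : μ ∈ probFunctionals K) :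
    μ ∈ closure (probFunctionals K \ {μ}) := by
  obtain ⟨ν, hν, hνμ⟩ : ∃ ν ∈ probFunctionals K, ν ≠ μ := by
    obtain ⟨x, y, hxy⟩ := exists_pair_ne K
    obtain ⟨f, hfx, hfy, -⟩ := exists_continuous_zero_one_of_isClosed isClosed_singleton
      isClosed_singleton (disjoint_singleton.2 hxy)
    by_contra! h
    have : f x = f y := congrArg (fun ψ : WeakDual ℝ C(K, ℝ) => ψ f)
      ((h _ (evalCLM_mem_probFunctionals x)).trans (h _ (evalCLM_mem_probFunctionals y)).symm)
    simp [hfx rfl, hfy rfl] at this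
  refine closure_mono ?_ (segment_subset_closure_openSegment (left_mem_segment ℝ μ ν))
  exact subset_sdiff_singleton (convex_probFunctionals.openSegment_subset hμ hν)
    (left_mem_openSegment_iff.not.2 hνμ.symm)

theorem relChar_dualBall_le_relChar_probFunctionals [T2Space K] [Nontrivial K]
    {μ : WeakDual ℝ C(K, ℝ)} (hμ : μ ∈ probFunctionals K) :
    relChar (dualBall C(K, ℝ)) μ ≤ relChar (probFunctionals K) μ :=
  relChar_le_relChar_of_isGδ (isCompact_dualBall _)
    (isClosed_Ici.isGδ.preimage (WeakDual.eval_continuous (1 : C(K, ℝ))))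
    (show 1 ≤ μ 1 from hμ.2.ge) probFunctionals_eq_dualBall_inter.symm.subset
    (mem_closure_probFunctionals_diff_singleton hμ)

/-- `|s| + ‖c‖ ≤ 1` makes `ψ ↦ s • ψ + c` map `P(K)` into the unit ball. -/
theorem exists_eq_smul_add {φ : C(K, ℝ) →L[ℝ] ℝ} (hφ : ‖φ‖ ≤ 1) (hφ0 : φ ≠ 0) :
    ∃ μ : C(K, ℝ) →L[ℝ] ℝ, StrongDual.toWeakDual μ ∈ probFunctionals K ∧
      ∃ s : ℝ, s ≠ 0 ∧ ∃ c : C(K, ℝ) →L[ℝ] ℝ, |s| + ‖c‖ ≤ 1 ∧ φ = s • μ + c := by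
  obtain ⟨φp, φn, hp, hn, rfl, hsum⟩ := exists_jordan_decomposition φ
  by_cases hp1 : φp 1 = 0
  · have hn1 : φn 1 ≠ 0 := fun hn1 => hφ0 <| by
      rw [eq_zero_of_apply_one_eq_zero hp hp1, eq_zero_of_apply_one_eq_zero hn hn1, sub_zero]
    refine ⟨(φn 1)⁻¹ • φn, inv_smul_mem_probFunctionals hn hn1, -(φn 1), neg_ne_zero.2 hn1, φp,
      ?_, ?_⟩
    · rw [abs_neg, abs_of_nonneg (hn 1 zero_le_one), opNorm_eq_apply_one hp]
      linarith
    · ext f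
      simp only [sub_apply, add_apply, smul_apply, smul_eq_mul, neg_mul, mul_inv_cancel_left₀ hn1]
      ring
  · refine ⟨(φp 1)⁻¹ • φp, inv_smul_mem_probFunctionals hp hp1, φp 1, hp1, -φn, ?_, ?_⟩
    · rw [ContinuousLinearMap.opNorm_neg, abs_of_nonneg (hp 1 zero_le_one),
        opNorm_eq_apply_one hn]
      linarith
    · rw [smul_inv_smul₀ hp1, sub_eq_add_neg]

theorem relChar_probFunctionals_le_relChar_dualBall {μ c : C(K, ℝ) →L[ℝ] ℝ} {s : ℝ} (hs : s ≠ 0)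
    (hsc : |s| + ‖c‖ ≤ 1) :
    relChar (probFunctionals K) (StrongDual.toWeakDual μ) ≤
      relChar (dualBall C(K, ℝ)) (StrongDual.toWeakDual (s • μ + c)) := by
  refine relChar_le_relChar_of_continuous (g := fun ψ => s • ψ + StrongDual.toWeakDual c)
    ((continuous_const_smul s).add continuous_const) isCompact_probFunctionals
    (fun ψ hψ => show ‖s • WeakDual.toStrongDual ψ + c‖ ≤ 1 from ?_)
    fun ψ _ h => smul_right_injective _ hs (add_right_cancel h)
  calc ‖s • WeakDual.toStrongDual ψ + c‖
      ≤ |s| * ‖WeakDual.toStrongDual ψ‖ + ‖c‖ :=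
        (norm_add_le (E := StrongDual ℝ C(K, ℝ)) _ _).trans
          (add_le_add_left (ContinuousLinearMap.opNorm_smul_le s _) _)
    _ ≤ 1 := by rw [norm_toStrongDual_of_mem_probFunctionals hψ, mul_one]; exact hsc

end ProbFunctionals

theorem stmt18_general {K : Type u} [TopologicalSpace K] [CompactSpace K] [T2Space K] [Infinite K]
    {κ : Cardinal.{u}} :
    (∀ φ : C(K, ℝ) →L[ℝ] ℝ, ‖φ‖ = 1 →
       κ ≤ relChar (dualBall (C(K, ℝ))) (StrongDual.toWeakDual φ)) ↔
    (∀ φ : C(K, ℝ) →L[ℝ] ℝ, (∀ f : C(K, ℝ), 0 ≤ f → 0 ≤ φ f) → φ 1 = 1 →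
       κ ≤ relChar
         {ψ : WeakDual ℝ C(K, ℝ) | (∀ f : C(K, ℝ), 0 ≤ f → 0 ≤ ψ f) ∧ ψ 1 = 1}
         (StrongDual.toWeakDual φ)) := by
  constructor
  · intro h μ hpos hone
    exact (h μ ((opNorm_eq_apply_one hpos).trans hone)).trans
      (relChar_dualBall_le_relChar_probFunctionals ⟨hpos, hone⟩)
  · intro h φ hφ
    obtain ⟨μ, hμ, s, hs, c, hsc, rfl⟩ :=
      exists_eq_smul_add hφ.le (norm_ne_zero_iff (a := φ) |>.1 (hφ.trans_ne one_ne_zero))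
    exact (h μ hμ.1 hμ.2).trans (relChar_probFunctionals_le_relChar_dualBall hs hsc)

/-- for `K` infinite compact Hausdorff and `κ` infinite: every norm-one
functional on `C(K)` has character `≥ κ` in the weak* dual ball iff every Radon
probability measure (realized via Riesz as a positive unital functional) has character
`≥ κ` in the space `P(K)` of such functionals with the weak* topology. -/
theorem stmt18 {K : Type u} [TopologicalSpace K] [CompactSpace K] [T2Space K] [Infinite K]
    {κ : Cardinal.{u}} (hκ : Cardinal.aleph0 ≤ κ) :
    (∀ φ : C(K, ℝ) →L[ℝ] ℝ, ‖φ‖ = 1 →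
       κ ≤ relChar (dualBall (C(K, ℝ))) (StrongDual.toWeakDual φ)) ↔
    (∀ φ : C(K, ℝ) →L[ℝ] ℝ, (∀ f : C(K, ℝ), 0 ≤ f → 0 ≤ φ f) → φ 1 = 1 →
       κ ≤ relChar
         {ψ : WeakDual ℝ C(K, ℝ) | (∀ f : C(K, ℝ), 0 ≤ f → 0 ≤ ψ f) ∧ ψ 1 = 1}
         (StrongDual.toWeakDual φ)) :=
  stmt18_general
end

section
/- Let κ be a cardinal of uncountable cofinality, X a Banach space of density κ, Y ⊆ X a closed subspace of density < κ, and y* ∈ S_{Y*} such that every norm-one extension x* ∈ E(y*) of y* to X has character κ in B_{X*} with the weak* topology. Suppose D ⊆ X has cardinality κ and D \ E is linearly dense in X for every E ⊆ D with |E| < κ. Then there exist x* ∈ S_{X*}, a subset D' ⊆ D of cardinality κ, and r ∈ ℝ such that x*(d) = r for all d ∈ D'. Consequently X does not admit an overcomplete set. -/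
/-!
Take a maximal set `M` of prescriptions `x*(d) = q`, with `d ∈ D` and `q` in a countable dense
set `S ⊆ ℝ`, that is realised by some `x* ∈ E(y*)`; chains are handled by weak* compactness of
`E(y*)`. Suppose fewer than `κ` points of `D` were prescribed. If `x*` were the only extension
with these values, then these points together with a dense subset of `Y` (fewer than `κ`
points in all) would determine `x*` within the compact dual ball, giving `x*` character `< κ`.
So a second extension agrees with `x*` on the prescribed points; as `D` is linearly dense the
two differ at some `d ∈ D`, and a convex combination of them takes a value of `S` at `d`,
contradicting maximality. Since `cof κ > ω`, one value `r ∈ S` is then taken `κ` times.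

For an overcomplete `D`, apply this with `S = ℚ`, and again inside the resulting set with
`S = ℚ \ {r}`: the two extensions `x*`, `x*'` and values `r ≠ s` give `s x* - r x*'`
vanishing on a linearly dense set, hence everywhere; restricted to `Y` it is `(s - r) y*`.
-/

open Cardinal Set

universe u

open Filter Topology

section

variable {X : Type u} [NormedAddCommGroup X] [NormedSpace ℝ X]

lemma LinearlyDense.ext {S : Set X} (hS : LinearlyDense S) {f g : X →L[ℝ] ℝ}
    (h : EqOn f g S) : f = g :=
  ContinuousLinearMap.ext_on (Submodule.dense_iff_topologicalClosure_eq_top.mpr hS) h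

lemma exists_dense_mk_eq_dens (W : Type u) [TopologicalSpace W] :
    ∃ s : Set W, Dense s ∧ #s = dens W := by
  have : Nonempty {s : Set W // Dense s} := ⟨⟨univ, dense_univ⟩⟩
  obtain ⟨s, hs⟩ := ciInf_mem fun s : {s : Set W // Dense s} => #s.1
  exact ⟨s.1, s.2, hs⟩

lemma mk_finset_le_max (α : Type u) : #(Finset α) ≤ max ℵ₀ #α := by
  classical
  exact (mk_le_of_surjective List.toFinset_surjective).trans (mk_list_le_max α)

lemma exists_mk_fiber_eq {α : Type u} {β : Type*} {κ : Cardinal.{u}} (hcf : ℵ₀ < κ.ord.cof)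
    {E : Set α} (hE : #E = κ) {S : Set β} (hS : S.Countable) {f : α → β} (hf : MapsTo f E S) :
    ∃ r ∈ S, #{x ∈ E | f x = r} = κ := by
  have : Countable S := hS.to_subtype
  have : Small.{u} S := Countable.toSmall S
  let e : S ≃ Shrink.{u} S := equivShrink S
  have : Countable (Shrink.{u} S) := Countable.of_equiv S e
  let g : E → Shrink.{u} S := fun x => e ⟨f x, hf x.2⟩
  have hκ : ℵ₀ ≤ κ := (hcf.trans_le (Ordinal.cof_ord_le κ)).le
  obtain ⟨a, ha⟩ := infinite_pigeonhole_card g κ hE.ge hκ (mk_le_aleph0.trans_lt hcf)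
  set r : S := e.symm a
  have hsub : Subtype.val '' (g ⁻¹' {a}) ⊆ {x ∈ E | f x = r} := by
    rintro _ ⟨x, hx, rfl⟩
    refine ⟨x.2, ?_⟩
    simp [r, ← show g x = a from hx, g]
  refine ⟨r, r.2, le_antisymm ((mk_le_mk_of_subset (sep_subset _ _)).trans hE.le) ?_⟩
  calc κ ≤ #(g ⁻¹' {a}) := ha
    _ = #(Subtype.val '' (g ⁻¹' {a})) := (mk_image_eq Subtype.val_injective).symm
    _ ≤ _ := mk_le_mk_of_subset hsub

lemma relChar_le_of_forall_eqOn_eq {K : Set (WeakDual ℝ X)} (hK : IsCompact K)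
    (ψ : WeakDual ℝ X) (I : Set X) (h : ∀ χ ∈ K, (∀ x ∈ I, χ x = ψ x) → χ = ψ) :
    relChar K ψ ≤ max ℵ₀ #I := by
  let V : Finset I × ℕ → Set (WeakDual ℝ X) := fun p =>
    {χ | ∀ x ∈ p.1, dist (χ x) (ψ x) < 1 / (p.2 + 1)}
  have hV_open : ∀ p, IsOpen (V p) := fun p => by
    simp only [V, ofPred_forall]
    exact isOpen_biInter_finset fun x _ =>
      isOpen_lt ((WeakDual.eval_continuous _).dist continuous_const) continuous_const
  have hψV : ∀ p, ψ ∈ V p := fun p x _ => by rw [dist_self]; positivity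
  have hV_dir : Directed (· ⊇ ·) V := by
    classical
    intro p q
    refine ⟨(p.1 ∪ q.1, max p.2 q.2), ?_, ?_⟩ <;> intro χ hχ x hx
    · exact (hχ x (Finset.mem_union_left _ hx)).trans_le
        (Nat.one_div_le_one_div (le_max_left _ _))
    · exact (hχ x (Finset.mem_union_right _ hx)).trans_le
        (Nat.one_div_le_one_div (le_max_right _ _))
  have hbasis := (hasBasis_iInf_principal hV_dir).inf_principal K
  -- `ψ` is the only possible cluster point in `K` of the filter generated by the `V p`
  have hle : (⨅ p, 𝓟 (V p)) ⊓ 𝓟 K ≤ 𝓝 ψ := by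
    refine hK.le_nhds_of_unique_clusterPt (mem_inf_of_right (mem_principal_self K))
      fun χ hχK hχ => h χ hχK fun x hx => eq_of_forall_dist_le fun ε hε => ?_
    obtain ⟨n, hn⟩ := exists_nat_one_div_lt hε
    have hclosure : χ ∈ closure (V ({⟨x, hx⟩}, n)) :=
      hχ.mem_closure_of_mem _ (mem_inf_of_left (mem_iInf_of_mem _ (mem_principal_self _)))
    have hclosed : closure (V ({⟨x, hx⟩}, n)) ⊆ {χ | dist (χ x) (ψ x) ≤ 1 / (n + 1)} :=
      closure_minimal (fun χ hχ => (hχ _ (Finset.mem_singleton_self _)).le)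
        (isClosed_le ((WeakDual.eval_continuous _).dist continuous_const) continuous_const)
    exact (hclosed hclosure).trans hn.le
  refine le_trans (b := #(range V)) (csInf_le' ⟨range V, rfl, ?_, fun U hU hψU => ?_⟩) ?_
  · rintro _ ⟨p, rfl⟩
    exact ⟨hψV p, hV_open p⟩
  · obtain ⟨p, -, hp⟩ := hbasis.mem_iff.mp (hle (hU.mem_nhds hψU))
    exact ⟨V p, mem_range_self p, hp⟩
  · calc #(range V) ≤ #(Finset I × ℕ) := mk_range_le
      _ = #(Finset I) * ℵ₀ := by simp
      _ ≤ max ℵ₀ #I * max ℵ₀ #I := mul_le_mul' (mk_finset_le_max I) (le_max_left _ _)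
      _ = max ℵ₀ #I := mul_eq_self (le_max_left _ _)

def interpolants (K : Set (WeakDual ℝ X)) (M : Set (X × ℝ)) : Set (WeakDual ℝ X) :=
  {ψ ∈ K | ∀ p ∈ M, ψ p.1 = p.2}

lemma interpolants_eq_inter (K : Set (WeakDual ℝ X)) (M : Set (X × ℝ)) :
    interpolants K M = K ∩ ⋂ p ∈ M, {ψ | ψ p.1 = p.2} := by
  ext; simp [interpolants]

lemma interpolants_anti (K : Set (WeakDual ℝ X)) {M M' : Set (X × ℝ)} (h : M ⊆ M') :
    interpolants K M' ⊆ interpolants K M :=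
  fun _ hψ => ⟨hψ.1, fun p hp => hψ.2 p (h hp)⟩

lemma isCompact_interpolants {K : Set (WeakDual ℝ X)} (hK : IsCompact K) (M : Set (X × ℝ)) :
    IsCompact (interpolants K M) := by
  rw [interpolants_eq_inter]
  exact hK.inter_right <| isClosed_biInter fun p _ =>
    isClosed_eq (WeakDual.eval_continuous _) continuous_const

lemma convex_interpolants {K : Set (WeakDual ℝ X)} (hK : Convex ℝ K) (M : Set (X × ℝ)) :
    Convex ℝ (interpolants K M) := by
  rw [interpolants_eq_inter]
  exact hK.inter <| convex_iInter₂ fun p _ =>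
    convex_hyperplane (f := fun ψ : WeakDual ℝ X => ψ p.1) ⟨fun _ _ => rfl, fun _ _ => rfl⟩ _

lemma nonempty_interpolants_sUnion {K : Set (WeakDual ℝ X)} (hK : IsCompact K)
    {c : Set (Set (X × ℝ))} (hc : IsChain (· ⊆ ·) c) (hne : c.Nonempty)
    (h : ∀ M ∈ c, (interpolants K M).Nonempty) : (interpolants K (⋃₀ c)).Nonempty := by
  have := hne.to_subtype
  obtain ⟨ψ, hψ⟩ := IsCompact.nonempty_iInter_of_directed_nonempty_isCompact_isClosed
    (interpolants K ∘ Subtype.val)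
    (Directed.mono_comp _ (fun _ _ => interpolants_anti K) hc.directed)
    (fun M => h M M.2) (fun M => isCompact_interpolants hK M)
    (fun M => (isCompact_interpolants hK M).isClosed)
  rw [mem_iInter] at hψ
  refine ⟨ψ, (hψ ⟨_, hne.some_mem⟩).1, ?_⟩
  rintro p ⟨M, hM, hp⟩
  exact (hψ ⟨M, hM⟩).2 p hp

lemma Convex.exists_mem_apply_eq {C : Set (WeakDual ℝ X)} (hC : Convex ℝ C)
    {ψ χ : WeakDual ℝ X} (hψ : ψ ∈ C) (hχ : χ ∈ C) (x : X) {q : ℝ} (hq : q ∈ uIcc (ψ x) (χ x)) :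
    ∃ φ ∈ C, φ x = q := by
  rw [← segment_eq_uIcc, segment_eq_image] at hq
  obtain ⟨θ, hθ, rfl⟩ := hq
  refine ⟨(1 - θ) • ψ + θ • χ, hC.segment_subset hψ hχ ?_, rfl⟩
  rw [segment_eq_image]
  exact ⟨θ, hθ, rfl⟩

theorem exists_mem_mapsTo_of_forall_exists_ne_eqOn {κ : Cardinal.{u}} {K : Set (WeakDual ℝ X)}
    (hKc : IsCompact K) (hKv : Convex ℝ K) (hKne : K.Nonempty)
    (hK : ∀ ψ ∈ K, ∀ A : Set X, #A < κ → ∃ χ ∈ K, χ ≠ ψ ∧ ∀ a ∈ A, χ a = ψ a)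
    {D : Set X} (hD : LinearlyDense D) (hDκ : #D = κ) {S : Set ℝ} (hS : Dense S) :
    ∃ ψ ∈ K, ∃ E ⊆ D, #E = κ ∧ MapsTo ψ E S := by
  obtain ⟨M, -, hM⟩ := zorn_subset_nonempty {M | M ⊆ D ×ˢ S ∧ (interpolants K M).Nonempty}
    (fun c hcS hc hne => ⟨⋃₀ c, ⟨sUnion_subset fun M hM => (hcS hM).1,
      nonempty_interpolants_sUnion hKc hc hne fun M hM => (hcS hM).2⟩,
      fun _ => subset_sUnion_of_mem⟩)
    ∅ ⟨empty_subset _, by simpa [interpolants] using hKne⟩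
  obtain ⟨hMDS, ψ, hψ⟩ := hM.prop
  have hED : Prod.fst '' M ⊆ D := by
    rintro _ ⟨p, hp, rfl⟩
    exact (hMDS hp).1
  refine ⟨ψ, hψ.1, Prod.fst '' M, hED, ?_, ?_⟩
  · by_contra hne
    obtain ⟨χ, hχK, hχψ, hχM⟩ :=
      hK ψ hψ.1 _ (((mk_le_mk_of_subset hED).trans_eq hDκ).lt_of_ne hne)
    have hχ : χ ∈ interpolants K M :=
      ⟨hχK, fun p hp => (hχM p.1 ⟨p, hp, rfl⟩).trans (hψ.2 p hp)⟩
    obtain ⟨d, hdD, hd⟩ : ∃ d ∈ D, ψ d ≠ χ d := by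
      by_contra! h
      exact hχψ (WeakDual.toStrongDual.injective (hD.ext fun d hd => (h d hd).symm))
    obtain ⟨q, hqS, hq⟩ := hS.exists_between (min_lt_max.2 hd)
    obtain ⟨φ, hφ, hφd⟩ :=
      (convex_interpolants hKv M).exists_mem_apply_eq hψ hχ d (Ioo_subset_Icc_self hq)
    have hdq : (d, q) ∈ M := hM.mem_of_prop_insert
      ⟨insert_subset ⟨hdD, hqS⟩ hMDS, φ, hφ.1, forall_mem_insert.2 ⟨hφd, hφ.2⟩⟩
    exact hd (hχM d ⟨_, hdq, rfl⟩).symm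
  · rintro _ ⟨p, hp, rfl⟩
    rw [hψ.2 p hp]
    exact (hMDS hp).2

lemma dualBall_eq_preimage : dualBall X = WeakDual.toStrongDual ⁻¹' Metric.closedBall 0 1 := by
  ext; simp [dualBall]

lemma isCompact_dualBall_s19 : IsCompact (dualBall X) := by
  rw [dualBall_eq_preimage]
  exact WeakDual.isCompact_closedBall 0 1

lemma convex_dualBall : Convex ℝ (dualBall X) := by
  rw [dualBall_eq_preimage]
  exact (convex_closedBall _ _).is_linear_preimage
    ⟨map_add WeakDual.toStrongDual, map_smul WeakDual.toStrongDual⟩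

/-- `E(y*)`, encoded as the functionals in the dual ball interpolating the graph of `ys`. -/
def dualBallExtensions (Y : Submodule ℝ X) (ys : Y →L[ℝ] ℝ) : Set (WeakDual ℝ X) :=
  interpolants (dualBall X) (range fun y : Y => ((y : X), ys y))

variable {Y : Submodule ℝ X} {ys : Y →L[ℝ] ℝ}

lemma mem_dualBallExtensions {ψ : WeakDual ℝ X} :
    ψ ∈ dualBallExtensions Y ys ↔ ψ ∈ dualBall X ∧ ∀ y : Y, ψ y = ys y := by
  simp only [dualBallExtensions, interpolants, mem_sep_iff, forall_mem_range]

lemma nonempty_dualBallExtensions (hys : ‖ys‖ ≤ 1) : (dualBallExtensions Y ys).Nonempty := by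
  obtain ⟨g, hg, hgn⟩ := exists_extension_norm_eq Y ys
  exact ⟨StrongDual.toWeakDual g, mem_dualBallExtensions.2 ⟨hgn.trans_le hys, hg⟩⟩

lemma norm_eq_one_of_mem_dualBallExtensions (hys : ‖ys‖ = 1) {ψ : WeakDual ℝ X}
    (hψ : ψ ∈ dualBallExtensions Y ys) : ‖WeakDual.toStrongDual ψ‖ = 1 := by
  obtain ⟨hψ1, hψY⟩ := mem_dualBallExtensions.1 hψ
  refine le_antisymm hψ1 <|
    hys ▸ ContinuousLinearMap.opNorm_le_bound _ (norm_nonneg _) fun y => ?_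
  rw [← hψY]
  exact (WeakDual.toStrongDual ψ).le_opNorm y

lemma exists_ne_mem_dualBallExtensions_eqOn {κ : Cardinal.{u}} (hκ : ℵ₀ < κ)
    (hYd : dens Y < κ) (hchar : ∀ ψ ∈ dualBallExtensions Y ys, relChar (dualBall X) ψ = κ)
    {ψ : WeakDual ℝ X} (hψ : ψ ∈ dualBallExtensions Y ys) {A : Set X} (hA : #A < κ) :
    ∃ χ ∈ dualBallExtensions Y ys, χ ≠ ψ ∧ ∀ a ∈ A, χ a = ψ a := by
  by_contra! h
  obtain ⟨s, hs, hsY⟩ := exists_dense_mk_eq_dens Y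
  have hI : #↑(A ∪ Subtype.val '' s) < κ :=
    (mk_union_le _ _).trans_lt (add_lt_of_lt hκ.le hA (mk_image_le.trans_lt (hsY ▸ hYd)))
  -- agreeing with `ψ` on a dense subset of `Y` already makes `χ` an extension of `ys`
  have huniq : ∀ χ ∈ dualBall X, (∀ x ∈ A ∪ Subtype.val '' s, χ x = ψ x) → χ = ψ := by
    intro χ hχ hχψ
    by_contra hne
    have hχY : ∀ y : Y, χ y = ys y := by
      intro y
      have hYeq : (fun y : Y => χ y) = fun y : Y => ψ y :=
        Continuous.ext_on hs ((WeakDual.toStrongDual χ).continuous.comp continuous_subtype_val)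
          ((WeakDual.toStrongDual ψ).continuous.comp continuous_subtype_val)
          fun y hy => hχψ y (Or.inr ⟨y, hy, rfl⟩)
      rw [congrFun hYeq y, (mem_dualBallExtensions.1 hψ).2 y]
    obtain ⟨a, ha, hne'⟩ := h χ (mem_dualBallExtensions.2 ⟨hχ, hχY⟩) hne
    exact hne' (hχψ a (Or.inl ha))
  exact (hchar ψ hψ).not_lt
    ((relChar_le_of_forall_eqOn_eq isCompact_dualBall_s19 ψ _ huniq).trans_lt (max_lt hκ hI))

theorem exists_extension_const_on_large_subset {κ : Cardinal.{u}}
    (hcf : ℵ₀ < κ.ord.cof) (hYd : dens Y < κ) (hys : ‖ys‖ = 1)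
    (hchar : ∀ φ : X →L[ℝ] ℝ, ‖φ‖ = 1 → (∀ y : Y, φ (y : X) = ys y) →
      relChar (dualBall X) (StrongDual.toWeakDual φ) = κ)
    {D : Set X} (hD : LinearlyDense D) (hDκ : #D = κ) {S : Set ℝ} (hSc : S.Countable)
    (hSd : Dense S) :
    ∃ φ : X →L[ℝ] ℝ, ‖φ‖ = 1 ∧ (∀ y : Y, φ y = ys y) ∧
      ∃ D' ⊆ D, #D' = κ ∧ ∃ r ∈ S, ∀ d ∈ D', φ d = r := by
  have hchar' : ∀ ψ ∈ dualBallExtensions Y ys, relChar (dualBall X) ψ = κ := fun ψ hψ =>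
    hchar _ (norm_eq_one_of_mem_dualBallExtensions hys hψ) (mem_dualBallExtensions.1 hψ).2
  have hK : ∀ ψ ∈ dualBallExtensions Y ys, ∀ A : Set X, #A < κ →
      ∃ χ ∈ dualBallExtensions Y ys, χ ≠ ψ ∧ ∀ a ∈ A, χ a = ψ a := fun _ hψ _ hA =>
    exists_ne_mem_dualBallExtensions_eqOn (hcf.trans_le (Ordinal.cof_ord_le κ)) hYd hchar' hψ hA
  obtain ⟨ψ, hψ, E, hED, hEκ, hES⟩ := exists_mem_mapsTo_of_forall_exists_ne_eqOn
    (isCompact_interpolants isCompact_dualBall_s19 _) (convex_interpolants convex_dualBall _)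
    (nonempty_dualBallExtensions hys.le) hK hD hDκ hSd
  obtain ⟨r, hrS, hr⟩ := exists_mk_fiber_eq hcf hEκ hSc hES
  exact ⟨WeakDual.toStrongDual ψ, norm_eq_one_of_mem_dualBallExtensions hys hψ,
    (mem_dualBallExtensions.1 hψ).2, _, (sep_subset _ _).trans hED, hr, r, hrS,
    fun d hd => hd.2⟩

lemma eq_of_extensions_eq_const_on_linearlyDense (hys : ys ≠ 0) {φ ψ : X →L[ℝ] ℝ}
    (hφ : ∀ y : Y, φ y = ys y) (hψ : ∀ y : Y, ψ y = ys y) {Z : Set X} (hZ : LinearlyDense Z)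
    {r s : ℝ} (hr : ∀ z ∈ Z, φ z = r) (hs : ∀ z ∈ Z, ψ z = s) : r = s := by
  obtain ⟨y, hy⟩ : ∃ y, ys y ≠ 0 := by
    by_contra! h
    exact hys (ContinuousLinearMap.ext h)
  have h0 : s • φ = r • ψ := hZ.ext fun z hz => by simp [hr z hz, hs z hz, mul_comm]
  have hy' : s * ys y = r * ys y := by simpa [hφ, hψ] using DFunLike.congr_fun h0 (y : X)
  exact (mul_right_cancel₀ hy hy').symm

theorem not_exists_overcomplete {κ : Cardinal.{u}} (hcf : ℵ₀ < κ.ord.cof) (hdens : dens X = κ)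
    (hYd : dens Y < κ) (hys : ‖ys‖ = 1)
    (hchar : ∀ φ : X →L[ℝ] ℝ, ‖φ‖ = 1 → (∀ y : Y, φ (y : X) = ys y) →
      relChar (dualBall X) (StrongDual.toWeakDual φ) = κ) :
    ¬ ∃ Z : Set X, Overcomplete Z := by
  rintro ⟨Z, hZκ, hZ⟩
  rw [hdens] at hZκ
  have hZd : ∀ Z' ⊆ Z, #Z' = κ → LinearlyDense Z' := fun Z' h h' => hZ Z' h (h'.trans hZκ.symm)
  have hℚ : (range ((↑) : ℚ → ℝ)).Countable := countable_range _
  obtain ⟨φ, -, hφY, Z', hZ'Z, hZ'κ, r, -, hr⟩ := exists_extension_const_on_large_subset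
    hcf hYd hys hchar (hZd Z subset_rfl hZκ) hZκ hℚ Rat.denseRange_cast
  obtain ⟨ψ, -, hψY, Z'', hZ''Z', hZ''κ, s, hs, hψs⟩ := exists_extension_const_on_large_subset
    hcf hYd hys hchar (hZd Z' hZ'Z hZ'κ) hZ'κ (hℚ.mono sdiff_subset)
    (Rat.denseRange_cast.sdiff_singleton r)
  refine hs.2 (eq_of_extensions_eq_const_on_linearlyDense ?_ hφY hψY
    (hZd Z'' (hZ''Z'.trans hZ'Z) hZ''κ) (fun z hz => hr z (hZ''Z' hz)) hψs).symm
  exact ne_zero_of_norm_ne_zero (E := Y →L[ℝ] ℝ) (hys ▸ one_ne_zero)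

end

theorem stmt19_general {X : Type u} [NormedAddCommGroup X] [NormedSpace ℝ X]
    {κ : Cardinal.{u}} (hcf : Cardinal.aleph0 < (κ.ord).cof) (hdens : dens X = κ)
    (Y : Submodule ℝ X) (hYd : dens Y < κ)
    (ys : Y →L[ℝ] ℝ) (hys : ‖ys‖ = 1)
    (hchar : ∀ φ : X →L[ℝ] ℝ, ‖φ‖ = 1 → (∀ y : Y, φ (y : X) = ys y) →
      relChar (dualBall X) (StrongDual.toWeakDual φ) = κ)
    (D : Set X) (hDcard : Cardinal.mk ↥D = κ)
    (hDdense : ∀ E ⊆ D, Cardinal.mk ↥E < κ → LinearlyDense (D \ E)) :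
    (∃ (φ : X →L[ℝ] ℝ) (D' : Set X) (r : ℝ), ‖φ‖ = 1 ∧ D' ⊆ D ∧
      Cardinal.mk ↥D' = κ ∧ ∀ d ∈ D', φ d = r) ∧
    ¬ ∃ Z : Set X, Overcomplete Z := by
  refine ⟨?_, not_exists_overcomplete hcf hdens hYd hys hchar⟩
  have hD : LinearlyDense D := by
    simpa using hDdense ∅ (empty_subset D)
      (by simpa using aleph0_pos.trans_le (hcf.le.trans (Ordinal.cof_ord_le κ)))
  obtain ⟨φ, hφ, -, D', hD'D, hD'κ, r, -, hr⟩ := exists_extension_const_on_large_subset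
    hcf hYd hys hchar hD hDcard (countable_range _) Rat.denseRange_cast
  exact ⟨φ, D', r, hφ, hD'D, hD'κ, hr⟩

/-- `κ` of uncountable cofinality, `X` of density `κ`, `Y ⊆ X` closed of
density `< κ`, `y* ∈ S_{Y*}` with all its norm-one extensions of character `κ` in the dual
ball; if `D ⊆ X` has cardinality `κ` and stays linearly dense after removing any `< κ`
elements, then some norm-one functional is constant on a `κ`-sized subset of `D`;
consequently `X` has no overcomplete set. -/
theorem stmt19 {X : Type u} [NormedAddCommGroup X] [NormedSpace ℝ X] [CompleteSpace X]
    {κ : Cardinal.{u}} (hcf : Cardinal.aleph0 < (κ.ord).cof) (hdens : dens X = κ)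
    (Y : Submodule ℝ X) (hYc : IsClosed (Y : Set X)) (hYd : dens Y < κ)
    (ys : Y →L[ℝ] ℝ) (hys : ‖ys‖ = 1)
    (hchar : ∀ φ : X →L[ℝ] ℝ, ‖φ‖ = 1 → (∀ y : Y, φ (y : X) = ys y) →
      relChar (dualBall X) (StrongDual.toWeakDual φ) = κ)
    (D : Set X) (hDcard : Cardinal.mk ↥D = κ)
    (hDdense : ∀ E ⊆ D, Cardinal.mk ↥E < κ → LinearlyDense (D \ E)) :
    (∃ (φ : X →L[ℝ] ℝ) (D' : Set X) (r : ℝ), ‖φ‖ = 1 ∧ D' ⊆ D ∧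
      Cardinal.mk ↥D' = κ ∧ ∀ d ∈ D', φ d = r) ∧
    ¬ ∃ Z : Set X, Overcomplete Z :=
  stmt19_general hcf hdens Y hYd ys hys hchar D hDcard hDdense
end
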